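/- arXiv:1909.04483 — 2 statements merged into one kernel-verified Lean document; each statement's English description precedes it below -/
import Mathlib

section
/- Let (X, d₀) be a compact metric space and λ ≥ 1. For each j ∈ ℕ let d_j be a metric on X with (1/λ)·d₀(p,q) ≤ d_j(p,q) ≤ λ·d₀(p,q) for all p, q ∈ X, and assume each d_j has the approximate midpoint property (for all p, q and ε > 0 there is m with max(d_j(p,m), d_j(m,q)) ≤ d_j(p,q)/2 + ε). Then there exist a subsequence (d_{j_k}) and a metric d_∞ on X satisfying (1/λ)·d₀ ≤ d_∞ ≤ λ·d₀ and the approximate midpoint property, such that sup_{p,q ∈ X} |d_{j_k}(p,q) − d_∞(p,q)| → 0 as k → ∞. -/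
/-!
Each `d j` is `λ`-Lipschitz in each variable with respect to `d₀`, because of the triangle
inequality and the upper bound `d j ≤ λ d₀`; so the `d j` form an equicontinuous, uniformly bounded
family of functions on the compact space `X × X`, and Arzelà–Ascoli yields a uniformly convergent
subsequence. The triangle inequality, symmetry and the bi-Lipschitz bounds pass to pointwise limits,
and the bounds alone force `d_∞ p q = 0 ↔ p = q`. Approximate midpoints need uniform convergence:
an approximate midpoint for `d_{j_k}` with `k` large is one for `d_∞`.
-/

open Filter Topology Function
open scoped NNReal

def HasApproxMidpoints {X : Type*} (d : X → X → ℝ) : Prop :=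
  ∀ p q : X, ∀ ε : ℝ, 0 < ε → ∃ m : X, max (d p m) (d m q) ≤ d p q / 2 + ε

theorem exists_strictMono_tendstoUniformly_of_equicontinuous {α β : Type*} [TopologicalSpace α]
    [CompactSpace α] [MetricSpace β] {F : ℕ → α → β} {s : Set β} (hs : IsCompact s)
    (hFs : ∀ n x, F n x ∈ s) (hF : Equicontinuous F) :
    ∃ φ : ℕ → ℕ, StrictMono φ ∧ ∃ g : α → β, TendstoUniformly (fun k => F (φ k)) g atTop := by
  let G : ℕ → BoundedContinuousFunction α β := fun n =>
    BoundedContinuousFunction.mkOfCompact ⟨F n, hF.continuous n⟩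
  have hG : Equicontinuous ((↑) : Set.range G → α → β) := by
    intro x U hU
    filter_upwards [hF x U hU] with y hy
    rintro ⟨_, n, rfl⟩
    exact hy n
  have hcompact : IsCompact (closure (Set.range G)) :=
    BoundedContinuousFunction.arzela_ascoli s hs _ (by rintro _ x ⟨n, rfl⟩; exact hFs n x) hG
  obtain ⟨g, -, φ, hφ, hlim⟩ :=
    hcompact.tendsto_subseq fun n => subset_closure (Set.mem_range_self n)
  exact ⟨φ, hφ, g, BoundedContinuousFunction.tendsto_iff_tendstoUniformly.1 hlim⟩

theorem lipschitzWith_uncurry_of_triangle {X : Type*} [PseudoMetricSpace X] {f : X → X → ℝ}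
    {K : ℝ≥0} (htri : ∀ p q r, f p r ≤ f p q + f q r)
    (hle : ∀ p q, f p q ≤ K * dist p q) : LipschitzWith (K + K) (uncurry f) := by
  refine LipschitzWith.uncurry (fun q => LipschitzWith.of_le_add_mul K fun p p' => ?_)
    (fun p => LipschitzWith.of_le_add_mul K fun q q' => ?_)
  · linarith [htri p p' q, hle p p']
  · linarith [htri p q' q, dist_comm q' q ▸ hle q' q]

section Limits

variable {X : Type*} {ι : Type*} {l : Filter ι} {D : ι → X → X → ℝ} {d : X → X → ℝ}

theorem symm_of_tendsto [l.NeBot] (hsymm : ∀ i p q, D i p q = D i q p)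
    (hlim : ∀ p q, Tendsto (fun i => D i p q) l (𝓝 (d p q))) (p q : X) : d p q = d q p :=
  tendsto_nhds_unique (hlim p q) (by simpa only [hsymm _ q p] using hlim q p)

theorem triangle_of_tendsto [l.NeBot] (htri : ∀ i p q r, D i p r ≤ D i p q + D i q r)
    (hlim : ∀ p q, Tendsto (fun i => D i p q) l (𝓝 (d p q))) (p q r : X) :
    d p r ≤ d p q + d q r :=
  le_of_tendsto_of_tendsto' (hlim p r) ((hlim p q).add (hlim q r)) fun i => htri i p q r

theorem HasApproxMidpoints.of_tendstoUniformly [l.NeBot] (hD : ∀ i, HasApproxMidpoints (D i))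
    (hlim : TendstoUniformly (fun i => uncurry (D i)) (uncurry d) l) :
    HasApproxMidpoints d := by
  intro p q ε hε
  obtain ⟨i, hi⟩ := (Metric.tendstoUniformly_iff.1 hlim (ε / 4) (by positivity)).exists
  obtain ⟨m, hm⟩ := hD i p q (ε / 4) (by positivity)
  have close : ∀ x y, |D i x y - d x y| < ε / 4 := fun x y => by
    simpa only [Real.dist_eq, abs_sub_comm, uncurry_apply_pair] using hi (x, y)
  obtain ⟨hpm, hmq⟩ := max_le_iff.1 hm
  refine ⟨m, max_le ?_ ?_⟩ <;>
    linarith [abs_lt.1 (close p m), abs_lt.1 (close m q), abs_lt.1 (close p q)]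

end Limits

theorem eq_zero_iff_of_le_mul_dist {X : Type*} [MetricSpace X] {f : X → X → ℝ} {c C : ℝ}
    (hc : 0 < c) (hf : ∀ p q, c * dist p q ≤ f p q ∧ f p q ≤ C * dist p q) (p q : X) :
    f p q = 0 ↔ p = q := by
  constructor
  · intro h
    have := (hf p q).1
    rw [h] at this
    exact dist_le_zero.1 (nonpos_of_mul_nonpos_right this hc)
  · rintro rfl
    have := hf p p
    simp only [dist_self, mul_zero] at this
    exact le_antisymm this.2 this.1

/-- uniform-convergence part of the Huang--Lee--Sormani compactness theorem:
on a compact metric space `(X,d₀)`, a sequence of metrics `d_j` that are `λ`-bi-Lipschitz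
equivalent to `d₀` and have the approximate midpoint property subconverges uniformly to a
metric `d_∞` with the same bi-Lipschitz bounds and the approximate midpoint property. -/
theorem stmt13 {X : Type*} [MetricSpace X] [CompactSpace X]
    (lam : ℝ) (hlam : 1 ≤ lam)
    (d : ℕ → X → X → ℝ)
    (hmetric : ∀ j, (∀ p q, d j p q = 0 ↔ p = q) ∧ (∀ p q, d j p q = d j q p) ∧
      ∀ p q r, d j p r ≤ d j p q + d j q r)
    (hbilip : ∀ j, ∀ p q : X,
      (1 / lam) * dist p q ≤ d j p q ∧ d j p q ≤ lam * dist p q)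
    (hmid : ∀ j, ∀ p q : X, ∀ ε : ℝ, 0 < ε →
      ∃ m : X, max (d j p m) (d j m q) ≤ d j p q / 2 + ε) :
    ∃ φ : ℕ → ℕ, StrictMono φ ∧ ∃ dinf : X → X → ℝ,
      ((∀ p q, dinf p q = 0 ↔ p = q) ∧ (∀ p q, dinf p q = dinf q p) ∧
        ∀ p q r, dinf p r ≤ dinf p q + dinf q r) ∧
      (∀ p q : X, (1 / lam) * dist p q ≤ dinf p q ∧ dinf p q ≤ lam * dist p q) ∧
      (∀ p q : X, ∀ ε : ℝ, 0 < ε →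
        ∃ m : X, max (dinf p m) (dinf m q) ≤ dinf p q / 2 + ε) ∧
      ∀ ε : ℝ, 0 < ε → ∃ N : ℕ, ∀ k ≥ N, ∀ p q : X,
        |d (φ k) p q - dinf p q| ≤ ε := by
  have hlam0 : 0 < lam := by linarith
  let K : ℝ≥0 := ⟨lam, hlam0.le⟩
  have hnonneg : ∀ j p q, 0 ≤ d j p q := fun j p q =>
    le_trans (by positivity) (hbilip j p q).1
  have hbound : ∀ j x, uncurry (d j) x ∈ Set.Icc 0 (lam * Metric.diam (Set.univ : Set X)) :=
    fun j x => ⟨hnonneg j x.1 x.2, (hbilip j x.1 x.2).2.trans <| mul_le_mul_of_nonneg_left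
      (Metric.dist_le_diam_of_mem isCompact_univ.isBounded trivial trivial) hlam0.le⟩
  have hequi : Equicontinuous fun j => uncurry (d j) :=
    (LipschitzWith.uniformEquicontinuous _ (K + K) fun j =>
      lipschitzWith_uncurry_of_triangle (hmetric j).2.2 fun p q => (hbilip j p q).2).equicontinuous
  obtain ⟨φ, hφ, g, hg⟩ :=
    exists_strictMono_tendstoUniformly_of_equicontinuous isCompact_Icc hbound hequi
  have hpt : ∀ p q, Tendsto (fun k => d (φ k) p q) atTop (𝓝 (curry g p q)) :=
    fun p q => hg.tendsto_at (p, q)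
  have hbilip_lim : ∀ p q : X, (1 / lam) * dist p q ≤ curry g p q ∧ curry g p q ≤ lam * dist p q :=
    fun p q => ⟨ge_of_tendsto' (hpt p q) fun k => (hbilip (φ k) p q).1,
      le_of_tendsto' (hpt p q) fun k => (hbilip (φ k) p q).2⟩
  refine ⟨φ, hφ, curry g, ⟨eq_zero_iff_of_le_mul_dist (by positivity) hbilip_lim,
    symm_of_tendsto (fun k => (hmetric (φ k)).2.1) hpt,
    triangle_of_tendsto (fun k => (hmetric (φ k)).2.2) hpt⟩, hbilip_lim,
    HasApproxMidpoints.of_tendstoUniformly (fun k => hmid (φ k)) hg, fun ε hε => ?_⟩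
  obtain ⟨N, hN⟩ := eventually_atTop.1 (Metric.tendstoUniformly_iff.1 hg ε hε)
  exact ⟨N, fun k hk p q => by
    simpa only [Real.dist_eq, abs_sub_comm, uncurry_apply_pair, curry_apply] using (hN k hk (p, q)).le⟩
end

section
/- Fix h₀ > 1 and a continuous nonincreasing h : [0,1] → [1,h₀] with h(t) = h₀ for t ∈ [0,1/2] and h(1) = 1. For j ≥ 1 define f_j : [0,2] → [1,h₀] by f_j(t) = h(j·t) for t ∈ [0, 1/j] and f_j(t) = 1 for t ∈ (1/j, 2]. Let X be a compact length space and let d̂_j denote the null distance of the warped product [0,2] ×_{f_j} X. Then the null distances converge uniformly to the null distance of the Lorentzian product: sup_{p,q ∈ [0,2]×X} |d̂_j(p,q) − d̂_σ(p,q)| → 0 as j → ∞, where d̂_σ((s,x),(t,y)) = max(|s − t|, d(x,y)). (Thus uniform convergence of the warping functions is not necessary for uniform convergence of the null distances.) -/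
open MeasureTheory

/-- Causal relation of the warped product `I ×_f X`: `(s,x) ≼_f (t,y)` iff `s ≤ t` and
`d(x,y) ≤ ∫_s^t f(u)⁻¹ du`. -/
def WPCausal {X : Type*} [MetricSpace X] (f : ℝ → ℝ) (p q : ℝ × X) : Prop :=
  p.1 ≤ q.1 ∧
    ENNReal.ofReal (dist p.2 q.2) ≤ ∫⁻ u in Set.Ioc p.1 q.1, ENNReal.ofReal ((f u)⁻¹)

/-- `σ` is a piecewise causal chain with `n+1` segments from `p` to `q` inside `I × X`. -/
def WPChain {X : Type*} [MetricSpace X] (I : Set ℝ) (f : ℝ → ℝ) (p q : ℝ × X) (n : ℕ)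
    (σ : ℕ → ℝ × X) : Prop :=
  σ 0 = p ∧ σ (n + 1) = q ∧ (∀ i ≤ n + 1, (σ i).1 ∈ I) ∧
    ∀ i ≤ n, WPCausal f (σ i) (σ (i + 1)) ∨ WPCausal f (σ (i + 1)) (σ i)

/-- The null distance of the warped product `I ×_f X`. -/
noncomputable def nullDist {X : Type*} [MetricSpace X] (I : Set ℝ) (f : ℝ → ℝ)
    (p q : ℝ × X) : ℝ :=
  sInf { r | ∃ n σ, WPChain I f p q n σ ∧
    r = ∑ i ∈ Finset.range (n + 1), |(σ (i + 1)).1 - (σ i).1| }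

/-- The warping functions of the example: `f_j(t) = h(j·t)` for `t ∈ [0,1/j]` and
`f_j(t) = 1` for `t ∈ (1/j,2]`. -/
noncomputable def warpSeq (h : ℝ → ℝ) (j : ℕ) : ℝ → ℝ :=
  fun t => if t ≤ 1 / (j : ℝ) then h ((j : ℝ) * t) else 1


/-! Since `f_j ≥ 1`, a causal segment satisfies `d(x,y) ≤ Δt`, so by the triangle inequality
every piecewise causal chain has null length at least `max(|s - t|, d(x,y))`. Conversely
`f_j = 1` after time `1/j`, so a segment with spatial step `d` and time step `g ≥ d + 1/j` is
causal. Split `x → y` by iterated approximate midpoints into `2^k` steps of length about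
`d(x,y)/2^k`; with `g = d(x,y)/2^k + 2/j`, climb diagonally towards time `t` and, once there,
zigzag by `±g` around it. This chain costs `max(|s - t|, 2^k g) + 2g`, which exceeds
`max(|s - t|, d(x,y))` by `O(diam X / 2^k + 2^k / j)`. -/

open Set

section NullChains

variable {X : Type*} [MetricSpace X] {I : Set ℝ} {f : ℝ → ℝ}

theorem dist_le_of_wpCausal {p q : ℝ × X} (hf : ∀ u ∈ Ioc p.1 q.1, 1 ≤ f u)
    (h : WPCausal f p q) : dist p.2 q.2 ≤ q.1 - p.1 := by
  obtain ⟨hle, hint⟩ := h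
  have hle_one : ∫⁻ u in Ioc p.1 q.1, ENNReal.ofReal (f u)⁻¹ ≤ ∫⁻ _ in Ioc p.1 q.1, 1 :=
    setLIntegral_mono' measurableSet_Ioc fun u hu =>
      ENNReal.ofReal_le_one.2 (inv_le_one_of_one_le₀ (hf u hu))
  rw [setLIntegral_one, Real.volume_Ioc] at hle_one
  exact (ENNReal.ofReal_le_ofReal_iff (by linarith)).1 (hint.trans hle_one)

theorem wpCausal_of_dist_add_le {c : ℝ} {p q : ℝ × X} (hc : 0 ≤ c)
    (hf : ∀ u ∈ Ioc (p.1 + c) q.1, f u = 1) (h : dist p.2 q.2 + c ≤ q.1 - p.1) :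
    WPCausal f p q := by
  refine ⟨by linarith [dist_nonneg (x := p.2) (y := q.2)], ?_⟩
  calc ENNReal.ofReal (dist p.2 q.2)
      ≤ ENNReal.ofReal (q.1 - (p.1 + c)) := ENNReal.ofReal_le_ofReal (by linarith)
    _ = ∫⁻ _ in Ioc (p.1 + c) q.1, 1 := by rw [setLIntegral_one, Real.volume_Ioc]
    _ = ∫⁻ u in Ioc (p.1 + c) q.1, ENNReal.ofReal (f u)⁻¹ :=
        setLIntegral_congr_fun measurableSet_Ioc fun u hu => by simp [hf u hu]
    _ ≤ ∫⁻ u in Ioc p.1 q.1, ENNReal.ofReal (f u)⁻¹ :=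
        lintegral_mono_set (Ioc_subset_Ioc_left (by linarith))

theorem wpCausal_vertical {a b : ℝ} (x : X) (hab : a ≤ b) : WPCausal f (a, x) (b, x) :=
  ⟨hab, by simp⟩

def HasNullChainLE (I : Set ℝ) (f : ℝ → ℝ) (p q : ℝ × X) (L : ℝ) : Prop :=
  ∃ n σ, WPChain I f p q n σ ∧ ∑ i ∈ Finset.range (n + 1), |(σ (i + 1)).1 - (σ i).1| ≤ L

namespace HasNullChainLE

variable {p q r : ℝ × X} {L L' : ℝ}

theorem mono (h : HasNullChainLE I f p q L) (hL : L ≤ L') : HasNullChainLE I f p q L' :=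
  let ⟨n, σ, hσ, hσL⟩ := h
  ⟨n, σ, hσ, hσL.trans hL⟩

theorem of_causal (hp : p.1 ∈ I) (hq : q.1 ∈ I) (h : WPCausal f p q ∨ WPCausal f q p) :
    HasNullChainLE I f p q |q.1 - p.1| := by
  refine ⟨0, fun i => if i = 0 then p else q, ⟨rfl, rfl, fun i _ => ?_, fun i hi => ?_⟩, by simp⟩
  · dsimp only
    split_ifs <;> assumption
  · obtain rfl : i = 0 := by omega
    simpa using h

theorem trans (hpr : HasNullChainLE I f p r L) (hrq : HasNullChainLE I f r q L') :
    HasNullChainLE I f p q (L + L') := by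
  obtain ⟨n, σ, ⟨hσ0, hσr, hσI, hσc⟩, hσL⟩ := hpr
  obtain ⟨n', τ, ⟨hτ0, hτq, hτI, hτc⟩, hτL⟩ := hrq
  set ρ : ℕ → ℝ × X := fun i => if i ≤ n + 1 then σ i else τ (i - (n + 1))
  have hρσ : ∀ i ≤ n + 1, ρ i = σ i := fun i hi => if_pos hi
  have hρτ : ∀ i, ρ (n + 1 + i) = τ i := by
    intro i
    rcases Nat.eq_zero_or_pos i with rfl | hi
    · simp [ρ, hσr, hτ0]
    · simp [ρ, show ¬ n + 1 + i ≤ n + 1 by omega]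
  have hρ : ∀ i, n + 1 ≤ i → ρ i = τ (i - (n + 1)) := fun i hi => by
    obtain ⟨k, rfl⟩ := Nat.exists_eq_add_of_le hi
    simp [hρτ]
  refine ⟨n + 1 + n', ρ, ⟨by simp [hρσ, hσ0], ?_, fun i hi => ?_, fun i hi => ?_⟩, ?_⟩
  · simpa [show n + 1 + n' + 1 = n + 1 + (n' + 1) by omega] using hρτ (n' + 1) ▸ hτq
  · rcases le_or_gt i (n + 1) with hin | hin
    · rw [hρσ i hin]; exact hσI i hin
    · rw [hρ i hin.le]; exact hτI _ (by omega)
  · rcases le_or_gt i n with hin | hin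
    · rw [hρσ i (by omega), hρσ (i + 1) (by omega)]; exact hσc i hin
    · rw [hρ i (by omega), hρ (i + 1) (by omega), show i + 1 - (n + 1) = i - (n + 1) + 1 by omega]
      exact hτc _ (by omega)
  · rw [show n + 1 + n' + 1 = (n + 1) + (n' + 1) by omega, Finset.sum_range_add]
    refine add_le_add (le_of_eq_of_le (Finset.sum_congr rfl fun i hi => ?_) hσL)
      (le_of_eq_of_le (Finset.sum_congr rfl fun i _ => ?_) hτL)
    · have := Finset.mem_range.1 hi
      rw [hρσ i (by omega), hρσ (i + 1) (by omega)]
    · rw [add_assoc, hρτ, hρτ]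

theorem nullDist_le (h : HasNullChainLE I f p q L) : nullDist I f p q ≤ L := by
  obtain ⟨n, σ, hσ, hσL⟩ := h
  have hbdd : BddBelow {r | ∃ n σ, WPChain I f p q n σ ∧
      r = ∑ i ∈ Finset.range (n + 1), |(σ (i + 1)).1 - (σ i).1|} := by
    refine ⟨0, ?_⟩
    rintro _ ⟨n, σ, -, rfl⟩
    positivity
  exact (csInf_le hbdd ⟨n, σ, hσ, rfl⟩).trans hσL

end HasNullChainLE

theorem max_abs_sub_dist_le_of_wpChain (hI : I.OrdConnected) (hf : ∀ u ∈ I, 1 ≤ f u)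
    {p q : ℝ × X} {n : ℕ} {σ : ℕ → ℝ × X} (hσ : WPChain I f p q n σ) :
    max |p.1 - q.1| (dist p.2 q.2) ≤ ∑ i ∈ Finset.range (n + 1), |(σ (i + 1)).1 - (σ i).1| := by
  obtain ⟨rfl, rfl, hσI, hσc⟩ := hσ
  have hstep : ∀ i ≤ n, dist (σ i).2 (σ (i + 1)).2 ≤ |(σ (i + 1)).1 - (σ i).1| := by
    intro i hi
    have hIcc : ∀ {a b}, a ∈ I → b ∈ I → ∀ u ∈ Ioc a b, 1 ≤ f u :=
      fun ha hb u hu => hf u (hI.out ha hb (Ioc_subset_Icc_self hu))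
    rcases hσc i hi with hc | hc
    · exact (dist_le_of_wpCausal (hIcc (hσI i (by omega)) (hσI (i + 1) (by omega))) hc).trans
        (le_abs_self _)
    · rw [dist_comm, abs_sub_comm]
      exact (dist_le_of_wpCausal (hIcc (hσI (i + 1) (by omega)) (hσI i (by omega))) hc).trans
        (le_abs_self _)
  refine max_le ?_ ?_
  · rw [abs_sub_comm, ← Finset.sum_range_sub (fun i => (σ i).1)]
    exact Finset.abs_sum_le_sum_abs _ _
  · refine (dist_le_range_sum_dist (fun i => (σ i).2) (n + 1)).trans (Finset.sum_le_sum ?_)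
    exact fun i hi => hstep i (Nat.lt_succ_iff.1 (Finset.mem_range.1 hi))

theorem max_abs_sub_dist_le_nullDist (hI : I.OrdConnected) (hf : ∀ u ∈ I, 1 ≤ f u)
    {p q : ℝ × X} {L : ℝ} (h : HasNullChainLE I f p q L) :
    max |p.1 - q.1| (dist p.2 q.2) ≤ nullDist I f p q := by
  obtain ⟨n, σ, hσ, -⟩ := h
  refine le_csInf ⟨_, n, σ, hσ, rfl⟩ ?_
  rintro _ ⟨n, σ, hσ, rfl⟩
  exact max_abs_sub_dist_le_of_wpChain hI hf hσ

theorem hasNullChainLE_vertical {a b : ℝ} (ha : a ∈ I) (hb : b ∈ I) (x : X) :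
    HasNullChainLE I f (a, x) (b, x) |b - a| := by
  refine HasNullChainLE.of_causal ha hb ?_
  rcases le_total a b with hab | hba
  exacts [Or.inl (wpCausal_vertical x hab), Or.inr (wpCausal_vertical x hba)]

variable {c : ℝ}

theorem hasNullChainLE_of_dist_add_le (hc : 0 ≤ c) (hf : ∀ a ∈ I, ∀ u, a + c < u → f u = 1)
    {a b : ℝ} (ha : a ∈ I) (hb : b ∈ I) {x y : X}
    (h : dist x y + c ≤ |b - a|) : HasNullChainLE I f (a, x) (b, y) |b - a| := by
  refine HasNullChainLE.of_causal ha hb ?_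
  rcases le_total a b with hab | hba
  · rw [abs_of_nonneg (sub_nonneg.2 hab)] at h
    exact Or.inl (wpCausal_of_dist_add_le hc (fun u hu => hf a ha u hu.1) h)
  · rw [abs_of_nonpos (sub_nonpos.2 hba), neg_sub, dist_comm] at h
    exact Or.inr (wpCausal_of_dist_add_le hc (fun u hu => hf b hb u hu.1) h)

theorem hasNullChainLE_zigzag (hc : 0 ≤ c) (hf : ∀ a ∈ I, ∀ u, a + c < u → f u = 1)
    (m : ℕ) :
    ∀ {a b : ℝ} {z : ℕ → X}, a ∈ I → b ∈ I → (∀ i < m, dist (z i) (z (i + 1)) + c ≤ |b - a|) →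
      HasNullChainLE I f (a, z 0) (a, z m) ((m + 1) * |b - a|) ∧
        HasNullChainLE I f (a, z 0) (b, z m) ((m + 1) * |b - a|) := by
  induction m with
  | zero =>
    intro a b z ha hb _
    refine ⟨(hasNullChainLE_vertical ha ha _).mono ?_, (hasNullChainLE_vertical ha hb _).mono ?_⟩
      <;> simp
  | succ m ih =>
    intro a b z ha hb hz
    have hstep := hasNullChainLE_of_dist_add_le hc hf ha hb (hz 0 (by omega))
    obtain ⟨hb_b, hb_a⟩ := ih (z := fun i => z (i + 1)) hb ha fun i hi => by
      simpa [abs_sub_comm] using hz (i + 1) (by omega)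
    have hcost : |b - a| + (m + 1) * |a - b| = ((m + 1 : ℕ) + 1) * |b - a| := by
      rw [abs_sub_comm]; push_cast; ring
    exact ⟨hcost ▸ hstep.trans hb_a, hcost ▸ hstep.trans hb_b⟩

theorem hasNullChainLE_max_add (hc : 0 ≤ c) (hf : ∀ a ∈ I, ∀ u, a + c < u → f u = 1)
    (hI : I.OrdConnected) {g : ℝ} (hpartner : ∀ a ∈ I, ∃ b ∈ I, |b - a| = g) (m : ℕ) :
    ∀ {s t : ℝ} {z : ℕ → X}, s ∈ I → t ∈ I → (∀ i < m, dist (z i) (z (i + 1)) + c ≤ g) →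
      HasNullChainLE I f (s, z 0) (t, z m) (max |s - t| (m * g) + 2 * g) := by
  induction m with
  | zero =>
    intro s t z hs ht _
    obtain ⟨_, -, hg⟩ := hpartner s hs
    refine (hasNullChainLE_vertical hs ht _).mono ?_
    rw [abs_sub_comm]
    linarith [le_max_left |s - t| ((0 : ℕ) * g), hg ▸ abs_nonneg _]
  | succ m ih =>
    intro s t z hs ht hz
    have hg : 0 ≤ g := (hz 0 (by omega)).trans' (by linarith [dist_nonneg (x := z 0) (y := z 1)])
    rcases le_or_gt g |s - t| with hgst | hstg
    · -- take one step of time-length `g` towards `t`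
      obtain ⟨s', hs', hs's, hts'⟩ : ∃ s' ∈ I, |s' - s| = g ∧ |s' - t| = |s - t| - g := by
        rcases le_total s t with hst | hts
        · rw [abs_of_nonpos (by linarith)] at hgst
          refine ⟨s + g, hI.out hs ht ⟨by linarith, by linarith⟩, by simp; linarith, ?_⟩
          rw [abs_of_nonpos (by linarith), abs_of_nonpos (by linarith)]; ring
        · rw [abs_of_nonneg (by linarith)] at hgst
          refine ⟨s - g, hI.out ht hs ⟨by linarith, by linarith⟩, by simp; linarith, ?_⟩
          rw [abs_of_nonneg (by linarith), abs_of_nonneg (by linarith)]; ring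
      have hstep := hasNullChainLE_of_dist_add_le hc hf hs hs' (hs's ▸ hz 0 (by omega))
      have htail := ih (z := fun i => z (i + 1)) hs' ht fun i hi => hz (i + 1) (by omega)
      refine (hstep.trans htail).mono ?_
      push_cast
      rw [hs's, hts']
      rcases max_cases (|s - t| - g) (m * g) with ⟨hmax, -⟩ | ⟨hmax, -⟩ <;> rw [hmax] <;>
        linarith [le_max_left |s - t| ((m + 1) * g), le_max_right |s - t| ((m + 1) * g)]
    · -- already within `g` of `t`: go to time `t`, then zigzag around it
      obtain ⟨b, hb, htb⟩ := hpartner t ht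
      have hvert := hasNullChainLE_vertical (f := f) hs ht (z 0)
      have hzig := (hasNullChainLE_zigzag hc hf (m + 1) ht hb (htb ▸ hz)).1
      refine (hvert.trans hzig).mono ?_
      rw [htb, abs_sub_comm]
      push_cast
      linarith [le_max_right |s - t| ((m + 1) * g)]

end NullChains

theorem exists_dyadic_chain {X : Type*} [MetricSpace X]
    (hX : ∀ x y : X, ∀ ε : ℝ, 0 < ε → ∃ z : X, max (dist x z) (dist z y) ≤ dist x y / 2 + ε)
    {δ : ℝ} (hδ : 0 < δ) (x y : X) (k : ℕ) :
    ∃ z : ℕ → X, z 0 = x ∧ z (2 ^ k) = y ∧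
      ∀ i < 2 ^ k, dist (z i) (z (i + 1)) ≤ dist x y / 2 ^ k + δ := by
  induction k with
  | zero =>
    refine ⟨fun i => if i = 0 then x else y, rfl, rfl, fun i hi => ?_⟩
    obtain rfl : i = 0 := by omega
    simp [hδ.le]
  | succ k ih =>
    obtain ⟨z, hz0, hzk, hz⟩ := ih
    -- insert an approximate midpoint `w i` between `z i` and `z (i + 1)`
    choose w hw using fun i => hX (z i) (z (i + 1)) (δ / 2) (half_pos hδ)
    have hw' : ∀ i < 2 ^ k, max (dist (z i) (w i)) (dist (w i) (z (i + 1))) ≤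
        dist x y / 2 ^ (k + 1) + δ := fun i hi => by
      rw [pow_succ, ← div_div]
      linarith [hw i, hz i hi]
    refine ⟨fun n => if n % 2 = 0 then z (n / 2) else w (n / 2), by simp [hz0], ?_, ?_⟩
    · simp [pow_succ, hzk]
    · intro n hn
      obtain ⟨i, rfl | rfl⟩ := Nat.even_or_odd' n
      · have := hw' i (by omega)
        simp only [show 2 * i % 2 = 0 by omega, show (2 * i + 1) % 2 ≠ 0 by omega,
          show 2 * i / 2 = i by omega, show (2 * i + 1) / 2 = i by omega, if_true, if_false]
        exact (le_max_left _ _).trans this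
      · have := hw' i (by omega)
        simp only [show (2 * i + 1) % 2 ≠ 0 by omega, show (2 * i + 1 + 1) % 2 = 0 by omega,
          show (2 * i + 1) / 2 = i by omega, show (2 * i + 1 + 1) / 2 = i + 1 by omega,
          if_true, if_false]
        exact (le_max_right _ _).trans this

theorem one_le_warpSeq {h : ℝ → ℝ} (hh : ∀ t ∈ Icc (0 : ℝ) 1, 1 ≤ h t) (j : ℕ) {u : ℝ}
    (hu : 0 ≤ u) : 1 ≤ warpSeq h j u := by
  unfold warpSeq
  split_ifs with huj
  · refine hh _ ⟨by positivity, ?_⟩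
    rcases Nat.eq_zero_or_pos j with rfl | hj
    · simp
    · rwa [← le_div_iff₀' (by positivity)]
  · exact le_rfl

theorem warpSeq_eq_one (h : ℝ → ℝ) (j : ℕ) {u : ℝ} (hu : 1 / (j : ℝ) < u) :
    warpSeq h j u = 1 :=
  if_neg (not_le.2 hu)

theorem exists_mem_Icc_abs_sub_eq {α β g t : ℝ} (hg : 0 ≤ g) (hgαβ : 2 * g ≤ β - α)
    (ht : t ∈ Icc α β) : ∃ b ∈ Icc α β, |b - t| = g := by
  rcases le_total α (t - g) with htg | htg
  · exact ⟨t - g, ⟨htg, by linarith [ht.2]⟩, by simp [abs_of_nonneg hg]⟩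
  · exact ⟨t + g, ⟨by linarith [ht.1], by linarith⟩, by simp [abs_of_nonneg hg]⟩

theorem abs_nullDist_warpSeq_sub_le {X : Type*} [MetricSpace X]
    (hX : ∀ x y : X, ∀ ε : ℝ, 0 < ε → ∃ z : X, max (dist x z) (dist z y) ≤ dist x y / 2 + ε)
    {h : ℝ → ℝ} (hh : ∀ t ∈ Icc (0 : ℝ) 1, 1 ≤ h t) {D : ℝ} (hD : ∀ x y : X, dist x y ≤ D)
    {j k : ℕ} (hj : 0 < j) (hjk : D / 2 ^ k + 2 / j ≤ 1) {p q : ℝ × X}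
    (hp : p.1 ∈ Icc (0 : ℝ) 2) (hq : q.1 ∈ Icc (0 : ℝ) 2) :
    |nullDist (Icc 0 2) (warpSeq h j) p q - max |p.1 - q.1| (dist p.2 q.2)| ≤
      2 * (D / 2 ^ k) + 2 * (2 ^ k + 2) / j := by
  obtain ⟨s, x⟩ := p
  obtain ⟨t, y⟩ := q
  dsimp only at hp hq ⊢
  have hjR : (0 : ℝ) < j := Nat.cast_pos.2 hj
  obtain ⟨z, hz0, hzk, hz⟩ := exists_dyadic_chain hX (one_div_pos.2 hjR) x y k
  set g := dist x y / 2 ^ k + 2 / j with hg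
  have hdD : dist x y / 2 ^ k ≤ D / 2 ^ k := by gcongr; exact hD x y
  have hg0 : 0 ≤ g := by positivity
  have hchain : HasNullChainLE (Icc 0 2) (warpSeq h j) (s, x) (t, y)
      (max |s - t| ((2 ^ k : ℕ) * g) + 2 * g) := by
    rw [← hz0, ← hzk]
    refine hasNullChainLE_max_add (c := 1 / j) (by positivity)
      (fun a ha u hu => warpSeq_eq_one h j (by linarith [ha.1])) ordConnected_Icc
      (fun a ha => exists_mem_Icc_abs_sub_eq hg0 (by linarith) ha) _ hp hq fun i hi => ?_
    linarith [hz i (by exact_mod_cast hi), show (2 : ℝ) / j = 1 / j + 1 / j by ring]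
  have hlow := max_abs_sub_dist_le_nullDist (f := warpSeq h j) ordConnected_Icc
    (fun u hu => one_le_warpSeq hh j hu.1) hchain
  have hupp := hchain.nullDist_le
  have hmg : ((2 ^ k : ℕ) : ℝ) * g = dist x y + 2 * 2 ^ k / j := by
    rw [hg]; push_cast; field_simp
  have hmax : max |s - t| ((2 ^ k : ℕ) * g) ≤ max |s - t| (dist x y) + 2 * 2 ^ k / j := by
    rw [hmg]
    have : (0 : ℝ) ≤ 2 * 2 ^ k / j := by positivity
    exact max_le (by linarith [le_max_left |s - t| (dist x y)])
      (by linarith [le_max_right |s - t| (dist x y)])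
  rw [abs_of_nonneg (sub_nonneg.2 hlow)]
  have : 2 * (2 ^ k + 2) / (j : ℝ) = 2 * 2 ^ k / j + 2 * (2 / j) := by ring
  linarith

theorem stmt17_general {X : Type*} [MetricSpace X] [CompactSpace X]
    (hX : ∀ x y : X, ∀ ε : ℝ, 0 < ε →
      ∃ z : X, max (dist x z) (dist z y) ≤ dist x y / 2 + ε)
    (h₀ : ℝ)
    (h : ℝ → ℝ)
    (hrange : ∀ t ∈ Set.Icc (0 : ℝ) 1, 1 ≤ h t ∧ h t ≤ h₀) :
    ∀ ε : ℝ, 0 < ε → ∃ N : ℕ, ∀ j ≥ N, ∀ p q : ℝ × X,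
      p.1 ∈ Set.Icc (0 : ℝ) 2 → q.1 ∈ Set.Icc (0 : ℝ) 2 →
      |nullDist (Set.Icc 0 2) (warpSeq h j) p q -
        max |p.1 - q.1| (dist p.2 q.2)| ≤ ε := by
  intro ε hε
  obtain ⟨D, hD⟩ : ∃ D, ∀ x y : X, dist x y ≤ D := by
    obtain ⟨D, hD⟩ := Metric.isBounded_iff.1 (isCompact_univ (X := X)).isBounded
    exact ⟨D, fun x y => hD (mem_univ x) (mem_univ y)⟩
  have hη : 0 < min (ε / 4) (1 / 2) := by positivity
  obtain ⟨k, hk⟩ : ∃ k : ℕ, D / 2 ^ k ≤ min (ε / 4) (1 / 2) := by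
    obtain ⟨k, hk⟩ := pow_unbounded_of_one_lt (D / min (ε / 4) (1 / 2)) one_lt_two
    refine ⟨k, (div_le_iff₀ (by positivity)).2 ?_⟩
    rw [div_lt_iff₀ hη] at hk
    linarith
  obtain ⟨N, hN⟩ := exists_nat_gt (4 * (2 ^ k + 2) / min ε 1)
  refine ⟨N, fun j hNj p q hp hq => ?_⟩
  have hjN : (N : ℝ) ≤ j := by exact_mod_cast hNj
  have hj : (0 : ℝ) < j := by linarith [show 0 < 4 * (2 ^ k + 2) / min ε 1 by positivity]
  have hjerr : 2 * (2 ^ k + 2) / j ≤ min ε 1 / 2 := by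
    rw [div_le_iff₀ hj]
    rw [div_lt_iff₀ (by positivity)] at hN
    nlinarith [min_le_right ε 1, lt_min hε one_pos]
  have h2j : 2 / (j : ℝ) ≤ 2 * (2 ^ k + 2) / j := by
    gcongr
    linarith [pow_pos (two_pos : (0 : ℝ) < 2) k]
  refine (abs_nullDist_warpSeq_sub_le hX (fun t ht => (hrange t ht).1) hD (k := k)
    (Nat.cast_pos.1 hj) ?_ hp hq).trans ?_
  · linarith [min_le_right (ε / 4) (1 / 2), min_le_right ε 1]
  · linarith [min_le_left (ε / 4) (1 / 2), min_le_left ε 1]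

/-- uniform convergence of the warping functions is not necessary: for the
warping functions `f_j` built from a nonincreasing `h` with `h ≡ h₀ > 1` on `[0,1/2]`,
`h(1) = 1`, the null distances of `[0,2] ×_{f_j} X` converge uniformly to the null
distance of the Lorentzian product, `d̂_σ((s,x),(t,y)) = max(|s−t|, d(x,y))`. -/
theorem stmt17 {X : Type*} [MetricSpace X] [CompactSpace X]
    (hX : ∀ x y : X, ∀ ε : ℝ, 0 < ε →
      ∃ z : X, max (dist x z) (dist z y) ≤ dist x y / 2 + ε)
    (h₀ : ℝ) (hh₀ : 1 < h₀)
    (h : ℝ → ℝ)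
    (hcont : ContinuousOn h (Set.Icc 0 1))
    (hanti : AntitoneOn h (Set.Icc 0 1))
    (hval : ∀ t ∈ Set.Icc (0 : ℝ) (1 / 2), h t = h₀)
    (hone : h 1 = 1)
    (hrange : ∀ t ∈ Set.Icc (0 : ℝ) 1, 1 ≤ h t ∧ h t ≤ h₀) :
    ∀ ε : ℝ, 0 < ε → ∃ N : ℕ, ∀ j ≥ N, ∀ p q : ℝ × X,
      p.1 ∈ Set.Icc (0 : ℝ) 2 → q.1 ∈ Set.Icc (0 : ℝ) 2 →
      |nullDist (Set.Icc 0 2) (warpSeq h j) p q -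
        max |p.1 - q.1| (dist p.2 q.2)| ≤ ε :=
  stmt17_general hX h₀ h hrange
end
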